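/- Let d₁, d₂ ∈ [−1,1], let U, V ∈ SO(2), and let S = V·diag(d₁,d₂)·U. Assume the two columns of S are not orthogonal, i.e., ⟨S e₁, S e₂⟩ ≠ 0. Then for every Q ∈ SO(2), h₂((1+(Q·S)₁₁)/2) + h₂((1+(Q·S)₂₂)/2) > h₂((1+d₁)/2) + h₂((1+d₂)/2). -/

import Mathlib

/-!
Put `f x = h₂((1 + x) / 2)`, which is even and strictly concave on `[-1, 1]`. Writing `Q V` and
`U` as rotations by `α` and `β`, the diagonal of `Q S` is `(u c + v m, u c - v m)`, where
`c = (d₁ + d₂) / 2`, `m = (d₁ - d₂) / 2`, `u = cos (α + β)`, `v = cos (α - β)`, whereas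
`(d₁, d₂) = (c + m, c - m)`. For a concave `f` and `|u| ≤ 1`, moving a symmetric pair `c ± m`
inwards to `c ± u m` does not decrease `f (c + m) + f (c - m)`. Shrinking first `m` by `v` and
then, after a reflection allowed by evenness, `c` by `u` gives the weak inequality. The columns of
`S` have inner product `cos β sin β (d₂² - d₁²)`; when it is nonzero, `c, m ≠ 0` and `|u| < 1` or
`|v| < 1`, so one of the two steps is strict.
-/

/-- Binary entropy function (base-2 logarithm), with the convention `0 * log 0 = 0`. -/
noncomputable def h2 (p : ℝ) : ℝ := -(p * Real.logb 2 p) - (1 - p) * Real.logb 2 (1 - p)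

/-- `M` is a real 2×2 special orthogonal matrix. -/
def SO2 (M : Matrix (Fin 2) (Fin 2) ℝ) : Prop := M.transpose * M = 1 ∧ M.det = 1

open Set Matrix

lemma Convex.add_mul_mem_of_abs_le {s : Set ℝ} (hs : Convex ℝ s) {c m u : ℝ} (hu : |u| ≤ 1)
    (hadd : c + m ∈ s) (hsub : c - m ∈ s) : c + u * m ∈ s := by
  obtain ⟨hu₁, hu₂⟩ := abs_le.mp hu
  convert hs hadd hsub (by linarith : 0 ≤ (1 + u) / 2) (by linarith : 0 ≤ (1 - u) / 2) (by ring)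
    using 1
  simp only [smul_eq_mul]; ring

lemma ConcaveOn.add_le_add_of_abs_le {f : ℝ → ℝ} {s : Set ℝ} (hf : ConcaveOn ℝ s f)
    {c m u : ℝ} (hu : |u| ≤ 1) (hadd : c + m ∈ s) (hsub : c - m ∈ s) :
    f (c + m) + f (c - m) ≤ f (c + u * m) + f (c - u * m) := by
  obtain ⟨hu₁, hu₂⟩ := abs_le.mp hu
  have ha : 0 ≤ (1 + u) / 2 := by linarith
  have hb : 0 ≤ (1 - u) / 2 := by linarith
  have hab : (1 + u) / 2 + (1 - u) / 2 = 1 := by ring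
  have h₁ := hf.2 hadd hsub ha hb hab
  have h₂ := hf.2 hsub hadd ha hb hab
  simp only [smul_eq_mul] at h₁ h₂
  rw [show (1 + u) / 2 * (c + m) + (1 - u) / 2 * (c - m) = c + u * m by ring] at h₁
  rw [show (1 + u) / 2 * (c - m) + (1 - u) / 2 * (c + m) = c - u * m by ring] at h₂
  linarith

lemma StrictConcaveOn.add_lt_add_of_abs_lt {f : ℝ → ℝ} {s : Set ℝ} (hf : StrictConcaveOn ℝ s f)
    {c m u : ℝ} (hm : m ≠ 0) (hu : |u| < 1) (hadd : c + m ∈ s) (hsub : c - m ∈ s) :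
    f (c + m) + f (c - m) < f (c + u * m) + f (c - u * m) := by
  obtain ⟨hu₁, hu₂⟩ := abs_lt.mp hu
  have ha : 0 < (1 + u) / 2 := by linarith
  have hb : 0 < (1 - u) / 2 := by linarith
  have hab : (1 + u) / 2 + (1 - u) / 2 = 1 := by ring
  have hne : c + m ≠ c - m := fun h => hm (by linarith)
  have h₁ := hf.2 hadd hsub hne ha hb hab
  have h₂ := hf.2 hsub hadd hne.symm ha hb hab
  simp only [smul_eq_mul] at h₁ h₂
  rw [show (1 + u) / 2 * (c + m) + (1 - u) / 2 * (c - m) = c + u * m by ring] at h₁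
  rw [show (1 + u) / 2 * (c - m) + (1 - u) / 2 * (c + m) = c - u * m by ring] at h₂
  linarith

lemma StrictConcaveOn.add_lt_add_of_even {f : ℝ → ℝ} {s : Set ℝ} (hf : StrictConcaveOn ℝ s f)
    (hs : ∀ x ∈ s, -x ∈ s) (heven : ∀ x, f (-x) = f x) {c m u v : ℝ} (hu : |u| ≤ 1)
    (hv : |v| ≤ 1) (hadd : c + m ∈ s) (hsub : c - m ∈ s)
    (hstrict : (c ≠ 0 ∧ |u| < 1) ∨ (m ≠ 0 ∧ |v| < 1)) :
    f (c + m) + f (c - m) < f (u * c + v * m) + f (u * c - v * m) := by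
  have hv_neg : |-v| ≤ 1 := by rwa [abs_neg]
  have hadd_v : v * m + c ∈ s := by
    rw [add_comm]; exact hf.1.add_mul_mem_of_abs_le hv hadd hsub
  have hsub_v : v * m - c ∈ s := by
    convert hs _ (hf.1.add_mul_mem_of_abs_le hv_neg hadd hsub) using 1; ring
  have hreflect (x y : ℝ) : f (y + x) + f (y - x) = f (x + y) + f (x - y) := by
    rw [← heven (y - x), neg_sub, add_comm y]
  rw [hreflect (v * m) (u * c)]
  rcases hstrict with ⟨hc, hu_lt⟩ | ⟨hm, hv_lt⟩
  · have h₁ := hf.concaveOn.add_le_add_of_abs_le hv hadd hsub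
    have h₂ := hf.add_lt_add_of_abs_lt hc hu_lt hadd_v hsub_v
    linarith [hreflect c (v * m)]
  · have h₁ := hf.add_lt_add_of_abs_lt hm hv_lt hadd hsub
    have h₂ := hf.concaveOn.add_le_add_of_abs_le hu hadd_v hsub_v
    linarith [hreflect c (v * m)]

lemma h2_eq_binEntropy_div_log_two (p : ℝ) : h2 p = Real.binEntropy p / Real.log 2 := by
  simp only [h2, Real.binEntropy, Real.logb, Real.log_inv]
  ring

lemma strictConcaveOn_h2_one_add_div_two :
    StrictConcaveOn ℝ (Icc (-1) 1) fun x => h2 ((1 + x) / 2) := by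
  refine ⟨convex_Icc _ _, fun x hx y hy hxy a b ha hb hab => ?_⟩
  have hlog : 0 < Real.log 2 := Real.log_pos one_lt_two
  have h := Real.strictConcave_binEntropy.2 (x := (1 + x) / 2) (y := (1 + y) / 2)
    ⟨by linarith [hx.1], by linarith [hx.2]⟩ ⟨by linarith [hy.1], by linarith [hy.2]⟩
    (fun h => hxy (by linarith)) ha hb hab
  simp only [smul_eq_mul, h2_eq_binEntropy_div_log_two] at h ⊢
  rw [show (1 + (a * x + b * y)) / 2 = a * ((1 + x) / 2) + b * ((1 + y) / 2) by
    linear_combination (-1 / 2 : ℝ) * hab, ← mul_div_assoc, ← mul_div_assoc, ← add_div]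
  exact div_lt_div_of_pos_right h hlog

lemma h2_one_add_neg_div_two (x : ℝ) : h2 ((1 + -x) / 2) = h2 ((1 + x) / 2) := by
  rw [h2_eq_binEntropy_div_log_two, h2_eq_binEntropy_div_log_two, ← Real.binEntropy_one_sub]
  ring_nf

lemma SO2.mul {A B : Matrix (Fin 2) (Fin 2) ℝ} (hA : SO2 A) (hB : SO2 B) : SO2 (A * B) :=
  ⟨by rw [transpose_mul, Matrix.mul_assoc, ← Matrix.mul_assoc Aᵀ, hA.1, Matrix.one_mul, hB.1],
    by rw [det_mul, hA.2, hB.2, one_mul]⟩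

lemma SO2.exists_eq_rotation {M : Matrix (Fin 2) (Fin 2) ℝ} (hM : SO2 M) :
    ∃ a b : ℝ, a ^ 2 + b ^ 2 = 1 ∧ M = !![a, -b; b, a] := by
  obtain ⟨horth, hdet⟩ := hM
  have h00 := congrFun₂ horth 0 0
  have h01 := congrFun₂ horth 0 1
  have h11 := congrFun₂ horth 1 1
  simp only [mul_apply, transpose_apply, Fin.sum_univ_two, one_apply_eq, one_apply_ne, ne_eq,
    zero_ne_one, not_false_eq_true] at h00 h01 h11
  rw [det_fin_two] at hdet
  have h01' : M 0 1 = -M 1 0 := by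
    linear_combination -(M 0 1) * hdet + (M 1 1) * h01 - (M 1 0) * h11
  have h11' : M 1 1 = M 0 0 := by
    linear_combination (M 0 0) * h11 - (M 1 1) * hdet - (M 0 1) * h01
  refine ⟨M 0 0, M 1 0, by linear_combination h00, ?_⟩
  conv_lhs => rw [eta_fin_two M]
  rw [h01', h11']

lemma rotation_mul_diagonal_mul_rotation (a b p q d1 d2 : ℝ) :
    !![a, -b; b, a] * diagonal ![d1, d2] * !![p, -q; q, p] =
      !![d1 * a * p - d2 * b * q, -(d1 * a * q + d2 * b * p);
        d1 * b * p + d2 * a * q, d2 * a * p - d1 * b * q] := by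
  rw [diagonal_fin_two, mul_fin_two, mul_fin_two]
  simp only [cons_val_zero, cons_val_one]
  ring_nf

lemma abs_mul_sub_mul_le_one {a b p q : ℝ} (hab : a ^ 2 + b ^ 2 = 1) (hpq : p ^ 2 + q ^ 2 = 1) :
    |a * p - b * q| ≤ 1 := by
  rw [← sq_le_one_iff_abs_le_one]
  nlinarith [sq_nonneg (a * q + b * p)]

lemma abs_mul_sub_mul_lt_one_or {a b p q : ℝ} (hab : a ^ 2 + b ^ 2 = 1) (hpq : p ^ 2 + q ^ 2 = 1)
    (hp : p ≠ 0) (hq : q ≠ 0) : |a * p - b * q| < 1 ∨ |a * p + b * q| < 1 := by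
  simp only [← sq_lt_one_iff_abs_lt_one]
  by_contra! h
  have hsum : (a * q) ^ 2 + (b * p) ^ 2 ≤ 0 := by
    linear_combination h.1 / 2 + h.2 / 2 + (p ^ 2 + q ^ 2) * hab + hpq
  obtain ⟨haq, hbp⟩ := (add_eq_zero_iff_of_nonneg (sq_nonneg _) (sq_nonneg _)).1
    (hsum.antisymm (by positivity))
  simp_all

lemma StrictConcaveOn.add_lt_add_of_rotations {f : ℝ → ℝ}
    (hf : StrictConcaveOn ℝ (Icc (-1) 1) f) (heven : ∀ x, f (-x) = f x) {d1 d2 a b p q : ℝ}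
    (hd1 : d1 ∈ Icc (-1) 1) (hd2 : d2 ∈ Icc (-1) 1) (hab : a ^ 2 + b ^ 2 = 1)
    (hpq : p ^ 2 + q ^ 2 = 1) (hgram : p * q * (d2 ^ 2 - d1 ^ 2) ≠ 0) :
    f d1 + f d2 < f (d1 * a * p - d2 * b * q) + f (d2 * a * p - d1 * b * q) := by
  have hp : p ≠ 0 := by rintro rfl; simp at hgram
  have hq : q ≠ 0 := by rintro rfl; simp at hgram
  have hsq : d2 ^ 2 - d1 ^ 2 ≠ 0 := by rintro h; simp [h] at hgram
  have hc : (d1 + d2) / 2 ≠ 0 := fun h => hsq (by linear_combination (2 * (d2 - d1)) * h)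
  have hm : (d1 - d2) / 2 ≠ 0 := fun h => hsq (by linear_combination (-2 * (d1 + d2)) * h)
  have hu : |a * p - b * q| ≤ 1 := abs_mul_sub_mul_le_one hab hpq
  have hv : |a * p + b * q| ≤ 1 := by
    simpa using abs_mul_sub_mul_le_one (b := -b) (by rwa [neg_sq]) hpq
  have hstrict : ((d1 + d2) / 2 ≠ 0 ∧ |a * p - b * q| < 1) ∨
      ((d1 - d2) / 2 ≠ 0 ∧ |a * p + b * q| < 1) := by
    rcases abs_mul_sub_mul_lt_one_or hab hpq hp hq with h | h
    exacts [.inl ⟨hc, h⟩, .inr ⟨hm, h⟩]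
  have key := hf.add_lt_add_of_even (fun x hx => ⟨by linarith [hx.2], by linarith [hx.1]⟩) heven
    hu hv (by convert hd1 using 1; ring) (by convert hd2 using 1; ring) hstrict
  convert key using 3 <;> ring

theorem stmt11 (d1 d2 : ℝ) (hd1 : d1 ∈ Set.Icc (-1 : ℝ) 1) (hd2 : d2 ∈ Set.Icc (-1 : ℝ) 1)
    (U V : Matrix (Fin 2) (Fin 2) ℝ) (hU : SO2 U) (hV : SO2 V)
    (S : Matrix (Fin 2) (Fin 2) ℝ)
    (hS : S = V * Matrix.diagonal ![d1, d2] * U)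
    (hne : S 0 0 * S 0 1 + S 1 0 * S 1 1 ≠ 0) :
    ∀ Q, SO2 Q →
      h2 ((1 + d1) / 2) + h2 ((1 + d2) / 2) <
        h2 ((1 + (Q * S) 0 0) / 2) + h2 ((1 + (Q * S) 1 1) / 2) := by
  intro Q hQ
  obtain ⟨a, b, hab, hQV⟩ := (hQ.mul hV).exists_eq_rotation
  obtain ⟨p, q, hpq, rfl⟩ := hU.exists_eq_rotation
  obtain ⟨a', b', hab', rfl⟩ := hV.exists_eq_rotation
  have hgram : p * q * (d2 ^ 2 - d1 ^ 2) ≠ 0 := by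
    rw [hS, rotation_mul_diagonal_mul_rotation] at hne
    contrapose! hne
    simp only [of_apply, cons_val', cons_val_zero, cons_val_one, cons_val_fin_one]
    linear_combination (a' ^ 2 + b' ^ 2) * hne
  rw [hS, ← Matrix.mul_assoc, ← Matrix.mul_assoc, hQV, rotation_mul_diagonal_mul_rotation]
  exact strictConcaveOn_h2_one_add_div_two.add_lt_add_of_rotations h2_one_add_neg_div_two hd1 hd2
    hab hpq hgram
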